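/- arXiv:2012.12831 — 9 statements merged into one kernel-verified Lean document; each statement's English description precedes it below -/
import Mathlib

section
/- Let n, m be positive integers with m ≤ n, and let H be a family of m-element subsets of {1,...,n} such that any two distinct sets in H have Hamming distance greater than 2 (i.e., |A \ B| + |B \ A| > 2 for all A ≠ B in H). Then the family F consisting of all m-element subsets of {1,...,n} not in H satisfies the basis exchange axiom: for all A ≠ B in F and every a ∈ A \ B, there exists b ∈ B \ A such that (A \ {a}) ∪ {b} ∈ F. -/
/-- Removing a separated family `H` from all `m`-element subsets of `{1,...,n}`
leaves a family satisfying the basis exchange axiom. -/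
theorem stmt0 (n m : ℕ) (hm : 0 < m) (hmn : m ≤ n)
    (H : Set (Finset ℕ))
    (hH : ∀ A ∈ H, A ⊆ Finset.Icc 1 n ∧ A.card = m)
    (hsep : ∀ A ∈ H, ∀ B ∈ H, A ≠ B → 2 < (A \ B).card + (B \ A).card) :
    ∀ A : Finset ℕ, (A ⊆ Finset.Icc 1 n ∧ A.card = m ∧ A ∉ H) →
    ∀ B : Finset ℕ, (B ⊆ Finset.Icc 1 n ∧ B.card = m ∧ B ∉ H) → A ≠ B →
    ∀ a ∈ A \ B, ∃ b ∈ B \ A,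
      insert b (A.erase a) ⊆ Finset.Icc 1 n ∧
      (insert b (A.erase a)).card = m ∧
      insert b (A.erase a) ∉ H := by
  rintro A ⟨hAsub, hAcard, hAH⟩ B ⟨hBsub, hBcard, hBH⟩ hAB a ha
  obtain ⟨haA, haB⟩ := Finset.mem_sdiff.mp ha
  -- basic facts about candidates
  have hcand : ∀ b ∈ B \ A, insert b (A.erase a) ⊆ Finset.Icc 1 n ∧
      (insert b (A.erase a)).card = m := by
    intro b hb
    obtain ⟨hbB, hbA⟩ := Finset.mem_sdiff.mp hb
    constructor
    · intro x hx
      rcases Finset.mem_insert.mp hx with rfl | hx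
      · exact hBsub hbB
      · exact hAsub (Finset.mem_of_mem_erase hx)
    · have hbnot : b ∉ A.erase a := fun h => hbA (Finset.mem_of_mem_erase h)
      rw [Finset.card_insert_of_notMem hbnot, Finset.card_erase_of_mem haA,
        hAcard]
      omega
  -- B \ A is nonempty
  have hcards : (A \ B).card = (B \ A).card := by
    have := Finset.card_sdiff_add_card_inter A B
    have := Finset.card_sdiff_add_card_inter B A
    rw [Finset.inter_comm] at this
    omega
  have hBA : (B \ A).Nonempty := by
    rw [← Finset.card_pos, ← hcards, Finset.card_pos]
    exact ⟨a, ha⟩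
  by_contra hcon
  push_neg at hcon
  have hall : ∀ b ∈ B \ A, insert b (A.erase a) ∈ H := by
    intro b hb
    obtain ⟨h1, h2⟩ := hcand b hb
    by_contra hnot
    exact hnot (hcon b hb h1 h2)
  by_cases hone : (B \ A).card = 1
  · -- then A \ B = {a} and the candidate equals B
    obtain ⟨b, hbeq⟩ := Finset.card_eq_one.mp hone
    have hbB : b ∈ B \ A := hbeq ▸ Finset.mem_singleton_self b
    obtain ⟨hbB', hbA⟩ := Finset.mem_sdiff.mp hbB
    have haeq : A \ B = {a} := by
      have : (A \ B).card = 1 := by rw [hcards]; exact hone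
      obtain ⟨a', ha'⟩ := Finset.card_eq_one.mp this
      rw [ha'] at ha ⊢
      rw [Finset.mem_singleton.mp ha]
    have hCB : insert b (A.erase a) = B := by
      apply Finset.ext
      intro x
      simp only [Finset.mem_insert, Finset.mem_erase]
      constructor
      · rintro (rfl | ⟨hxa, hxA⟩)
        · exact hbB'
        · by_contra hxB
          have : x ∈ A \ B := Finset.mem_sdiff.mpr ⟨hxA, hxB⟩
          rw [haeq, Finset.mem_singleton] at this
          exact hxa this
      · intro hxB
        by_cases hxA : x ∈ A
        · right
          refine ⟨?_, hxA⟩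
          rintro rfl; exact haB hxB
        · left
          have : x ∈ B \ A := Finset.mem_sdiff.mpr ⟨hxB, hxA⟩
          rw [hbeq, Finset.mem_singleton] at this
          exact this
    exact hBH (hCB ▸ hall b hbB)
  · -- pick two distinct elements of B \ A
    have h2 : 2 ≤ (B \ A).card := by
      have := Finset.card_pos.mpr hBA
      omega
    obtain ⟨b, hb, c, hc, hbc⟩ := Finset.one_lt_card.mp h2
    have hbA : b ∉ A := (Finset.mem_sdiff.mp hb).2
    have hcA : c ∉ A := (Finset.mem_sdiff.mp hc).2
    set C1 := insert b (A.erase a) with hC1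
    set C2 := insert c (A.erase a) with hC2
    have hne : C1 ≠ C2 := by
      intro h
      have : b ∈ C2 := h ▸ Finset.mem_insert_self b _
      rcases Finset.mem_insert.mp this with rfl | hmem
      · exact hbc rfl
      · exact hbA (Finset.mem_of_mem_erase hmem)
    have hsub1 : C1 \ C2 ⊆ {b} := by
      intro x hx
      obtain ⟨hx1, hx2⟩ := Finset.mem_sdiff.mp hx
      rcases Finset.mem_insert.mp hx1 with rfl | hmem
      · exact Finset.mem_singleton_self x
      · exact absurd (Finset.mem_insert_of_mem hmem) hx2
    have hsub2 : C2 \ C1 ⊆ {c} := by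
      intro x hx
      obtain ⟨hx1, hx2⟩ := Finset.mem_sdiff.mp hx
      rcases Finset.mem_insert.mp hx1 with rfl | hmem
      · exact Finset.mem_singleton_self x
      · exact absurd (Finset.mem_insert_of_mem hmem) hx2
    have hd1 : (C1 \ C2).card ≤ 1 := by
      simpa using Finset.card_le_card hsub1
    have hd2 : (C2 \ C1).card ≤ 1 := by
      simpa using Finset.card_le_card hsub2
    have := hsep C1 (hall b hb) C2 (hall c hc) hne
    omega
end

section
/- For every n ≥ 1 and 0 ≤ m ≤ n, there exists a family H of m-element subsets of {1,...,n} with |H| ≥ (n choose m)/n such that any two distinct sets of H have Hamming distance greater than 2. -/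
/-- Key separation lemma: two distinct `m`-sets in `Icc 1 n` with equal sum mod `n`
have Hamming distance > 2. -/
lemma sep_lemma (n m : ℕ) (hn : 1 ≤ n) (S T : Finset ℕ)
    (hS : S ⊆ Finset.Icc 1 n) (hT : T ⊆ Finset.Icc 1 n)
    (hSc : S.card = m) (hTc : T.card = m)
    (hmod : (∑ i ∈ S, i) % n = (∑ i ∈ T, i) % n)
    (hne : S ≠ T) : 2 < (S \ T).card + (T \ S).card := by
  have hST : (S \ T).Nonempty := by
    rw [Finset.sdiff_nonempty]
    intro hsub
    exact hne (Finset.eq_of_subset_of_card_le hsub (by omega))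
  have hTS : (T \ S).Nonempty := by
    rw [Finset.sdiff_nonempty]
    intro hsub
    exact hne ((Finset.eq_of_subset_of_card_le hsub (by omega)).symm)
  have h1 : 1 ≤ (S \ T).card := Finset.card_pos.mpr hST
  have h2 : 1 ≤ (T \ S).card := Finset.card_pos.mpr hTS
  -- card (S\T) = card (T\S) since |S| = |T|
  have hcardeq : (S \ T).card = (T \ S).card := by
    have e1 : (S ∩ T).card + (S \ T).card = S.card := Finset.card_inter_add_card_sdiff S T
    have e2 : (T ∩ S).card + (T \ S).card = T.card := Finset.card_inter_add_card_sdiff T S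
    rw [Finset.inter_comm] at e2
    omega
  by_contra hle
  push_neg at hle
  have hc1 : (S \ T).card = 1 := by omega
  have hc2 : (T \ S).card = 1 := by omega
  obtain ⟨a, ha⟩ := Finset.card_eq_one.mp hc1
  obtain ⟨b, hb⟩ := Finset.card_eq_one.mp hc2
  have haS : a ∈ S \ T := by rw [ha]; exact Finset.mem_singleton_self a
  have hbT : b ∈ T \ S := by rw [hb]; exact Finset.mem_singleton_self b
  rw [Finset.mem_sdiff] at haS hbT
  have hab : a ≠ b := fun h => haS.2 (h ▸ hbT.1)
  have haI := hS haS.1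
  have hbI := hT hbT.1
  rw [Finset.mem_Icc] at haI hbI
  have sum1 : (∑ i ∈ S ∩ T, i) + a = ∑ i ∈ S, i := by
    have := Finset.sum_inter_add_sum_sdiff S T (id : ℕ → ℕ)
    rw [ha, Finset.sum_singleton] at this
    simpa using this
  have sum2 : (∑ i ∈ S ∩ T, i) + b = ∑ i ∈ T, i := by
    have := Finset.sum_inter_add_sum_sdiff T S (id : ℕ → ℕ)
    rw [hb, Finset.sum_singleton, Finset.inter_comm] at this
    simpa using this
  have hmab : a ≡ b [MOD n] := by
    have h : (∑ i ∈ S ∩ T, i) + a ≡ (∑ i ∈ S ∩ T, i) + b [MOD n] := by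
      rw [Nat.ModEq, sum1, sum2]; exact hmod
    exact Nat.ModEq.add_left_cancel' _ h
  -- a, b ∈ [1, n] and a ≡ b mod n implies a = b
  rcases le_total a b with hab' | hab'
  · have hdvd : n ∣ b - a := (Nat.modEq_iff_dvd' hab').mp hmab
    have : b - a = 0 := by
      by_contra h0
      exact absurd (Nat.le_of_dvd (Nat.pos_of_ne_zero h0) hdvd) (by omega)
    exact hab (by omega)
  · have hdvd : n ∣ a - b := (Nat.modEq_iff_dvd' hab').mp hmab.symm
    have : a - b = 0 := by
      by_contra h0
      exact absurd (Nat.le_of_dvd (Nat.pos_of_ne_zero h0) hdvd) (by omega)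
    exact hab (by omega)

/-- There is a separated family of `m`-element subsets of `{1,...,n}`
of size at least `(n choose m)/n`. -/
theorem stmt1 (n m : ℕ) (hn : 1 ≤ n) (hm : m ≤ n) :
    ∃ H : Finset (Finset ℕ),
      (∀ S ∈ H, S ⊆ Finset.Icc 1 n ∧ S.card = m) ∧
      Nat.choose n m ≤ n * H.card ∧
      (∀ S ∈ H, ∀ T ∈ H, S ≠ T → 2 < (S \ T).card + (T \ S).card) := by
  set P := (Finset.Icc 1 n).powersetCard m with hP
  have hPcard : P.card = Nat.choose n m := by
    rw [hP, Finset.card_powersetCard, Nat.card_Icc]; simp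
  set f : Finset ℕ → ℕ := fun S => (∑ i ∈ S, i) % n with hf
  have hmap : ∀ S ∈ P, f S ∈ Finset.range n := by
    intro S _
    exact Finset.mem_range.mpr (Nat.mod_lt _ hn)
  have hsum : P.card = ∑ l ∈ Finset.range n, (P.filter fun S => f S = l).card :=
    Finset.card_eq_sum_card_fiberwise hmap
  obtain ⟨l₀, hl₀, hmax⟩ := Finset.exists_max_image (Finset.range n)
    (fun l => (P.filter fun S => f S = l).card) ⟨0, Finset.mem_range.mpr hn⟩
  refine ⟨P.filter fun S => f S = l₀, ?_, ?_, ?_⟩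
  · intro S hS
    have := Finset.mem_filter.mp hS |>.1
    rw [hP, Finset.mem_powersetCard] at this
    exact this
  · calc Nat.choose n m = P.card := hPcard.symm
      _ = ∑ l ∈ Finset.range n, (P.filter fun S => f S = l).card := hsum
      _ ≤ ∑ _l ∈ Finset.range n, (P.filter fun S => f S = l₀).card :=
          Finset.sum_le_sum fun l hl => hmax l hl
      _ = n * (P.filter fun S => f S = l₀).card := by
          rw [Finset.sum_const, Finset.card_range, smul_eq_mul]
  · intro S hS T hT hne
    obtain ⟨hSP, hSf⟩ := Finset.mem_filter.mp hS
    obtain ⟨hTP, hTf⟩ := Finset.mem_filter.mp hT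
    rw [hP, Finset.mem_powersetCard] at hSP hTP
    exact sep_lemma n m hn S T hSP.1 hTP.1 hSP.2 hTP.2 (hSf.trans hTf.symm) hne
end

section
/- Fix l ∈ {0,...,n−1}, and let H_l be the family of all m-element subsets S of {1,...,n} with ∑_{i∈S} i ≡ l (mod n). Then any two distinct sets S ≠ T in H_l have Hamming distance greater than 2. -/
/-- Any two distinct `m`-element subsets of `{1,...,n}` whose element sums are
congruent to the same `l` modulo `n` have Hamming distance greater than 2. -/
theorem stmt2 (n m l : ℕ) (hl : l < n) (S T : Finset ℕ)
    (hS : S ⊆ Finset.Icc 1 n) (hT : T ⊆ Finset.Icc 1 n)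
    (hSc : S.card = m) (hTc : T.card = m)
    (hSl : (∑ i ∈ S, i) % n = l) (hTl : (∑ i ∈ T, i) % n = l)
    (hne : S ≠ T) :
    2 < (S \ T).card + (T \ S).card := by
  by_contra h
  push_neg at h
  have e1 := Finset.card_sdiff_add_card_inter S T
  have e2 := Finset.card_sdiff_add_card_inter T S
  rw [Finset.inter_comm] at e2
  have hcard : (S \ T).card = (T \ S).card := by omega
  have hpos : 0 < (S \ T).card := by
    rcases Nat.eq_zero_or_pos (S \ T).card with h0 | h0
    · exfalso
      apply hne
      have hsub : S ⊆ T := by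
        rwa [← Finset.sdiff_eq_empty_iff_subset, ← Finset.card_eq_zero]
      exact Finset.eq_of_subset_of_card_le hsub (by omega)
    · exact h0
  have h1 : (S \ T).card = 1 := by omega
  have h2 : (T \ S).card = 1 := by omega
  obtain ⟨s, hs⟩ := Finset.card_eq_one.mp h1
  obtain ⟨t, ht⟩ := Finset.card_eq_one.mp h2
  have hsum1 := Finset.sum_inter_add_sum_sdiff S T id
  have hsum2 := Finset.sum_inter_add_sum_sdiff T S id
  rw [Finset.inter_comm] at hsum2
  rw [hs] at hsum1
  rw [ht] at hsum2
  simp only [id_eq, Finset.sum_singleton] at hsum1 hsum2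
  have hsmem : s ∈ S \ T := hs ▸ Finset.mem_singleton_self s
  have htmem : t ∈ T \ S := ht ▸ Finset.mem_singleton_self t
  obtain ⟨hsS, hsT⟩ := Finset.mem_sdiff.mp hsmem
  obtain ⟨htT, htS⟩ := Finset.mem_sdiff.mp htmem
  have hsI := Finset.mem_Icc.mp (hS hsS)
  have htI := Finset.mem_Icc.mp (hT htT)
  set A := ∑ i ∈ S ∩ T, i with hA
  have hmod : (A + s) % n = (A + t) % n := by
    rw [hsum1, hsum2, hSl, hTl]
  have hst : s % n = t % n := Nat.ModEq.add_left_cancel' A hmod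
  have hseq : s = t := by
    rcases Nat.lt_or_ge s n with hs' | hs'
    · rcases Nat.lt_or_ge t n with ht' | ht'
      · rwa [Nat.mod_eq_of_lt hs', Nat.mod_eq_of_lt ht'] at hst
      · have htn : t = n := le_antisymm htI.2 ht'
        rw [Nat.mod_eq_of_lt hs', htn, Nat.mod_self] at hst
        omega
    · have hsn : s = n := le_antisymm hsI.2 hs'
      rcases Nat.lt_or_ge t n with ht' | ht'
      · rw [hsn, Nat.mod_self, Nat.mod_eq_of_lt ht'] at hst
        omega
      · have htn : t = n := le_antisymm htI.2 ht'
        rw [hsn, htn]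
  exact hsT (hseq ▸ htT)
end

section
/- Let a, a^(1), ..., a^(m) be vectors in ℝ^n. The following are equivalent: (1) for every x ∈ ℝ^n with all coordinates nonnegative, ⟨a, x⟩ ≥ min_i ⟨a^(i), x⟩; (2) there exist nonnegative reals λ_1,...,λ_m with λ_1 + ... + λ_m = 1 and a ≥ ∑_i λ_i a^(i) (componentwise inequality). -/
/-!
If no convex combination `λ ᵥ* A` of the rows lies below `a`, then the compact convex set of all
such combinations is disjoint from the closed convex orthant `Iic a`, and Hahn–Banach separates
them by a functional `f`. Since `f` is bounded below on `Iic a`, which is unbounded in every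
direction `-z` with `z ≥ 0`, `f` is nonpositive on the nonnegative cone; so `f = -⟨·, x⟩` with
`x ≥ 0`, and `⟨a, x⟩ < ⟨aᶦ, x⟩` for every row. Conversely, the minimum of the `⟨aᶦ, x⟩` is at most
their `λ`-weighted average `⟨λ ᵥ* A, x⟩ ≤ ⟨a, x⟩`.
-/

open Matrix Set

theorem LinearMap.nonpos_of_bddBelow_image_Iic {E : Type*} [AddCommGroup E] [PartialOrder E]
    [IsOrderedAddMonoid E] [Module ℝ E] [PosSMulMono ℝ E] (f : E →ₗ[ℝ] ℝ) {a : E}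
    (hf : BddBelow (f '' Iic a)) {z : E} (hz : 0 ≤ z) : f z ≤ 0 := by
  obtain ⟨c, hc⟩ := hf
  have hca : c ≤ f a := hc (mem_image_of_mem f self_mem_Iic)
  by_contra! hfz
  have hmem : a - ((f a - c + 1) / f z) • z ∈ Iic a :=
    sub_le_self a (smul_nonneg (div_nonneg (by linarith) hfz.le) hz)
  have := hc (mem_image_of_mem f hmem)
  rw [map_sub, map_smul, smul_eq_mul, div_mul_cancel₀ _ hfz.ne'] at this
  linarith

variable {ι κ : Type*} [Fintype ι] [Fintype κ]

theorem exists_nonneg_dotProduct_lt_of_disjoint_Iic {K : Set (ι → ℝ)} (hKconv : Convex ℝ K)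
    (hK : IsCompact K) {a : ι → ℝ} (hdisj : Disjoint K (Iic a)) :
    ∃ x, 0 ≤ x ∧ ∀ y ∈ K, a ⬝ᵥ x < y ⬝ᵥ x := by
  classical
  obtain ⟨f, u, v, hfK, huv, hfa⟩ :=
    geometric_hahn_banach_compact_closed hKconv hK (convex_Iic a) isClosed_Iic hdisj
  set w := (dotProductEquiv ℝ ι).symm f.toLinearMap
  have hw : ∀ y, y ⬝ᵥ (-w) = -f y := fun y => by
    rw [dotProduct_neg, dotProduct_comm, ← dotProductEquiv_apply_apply,
      LinearEquiv.apply_symm_apply]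
    rfl
  refine ⟨-w, fun j => ?_, fun y hy => ?_⟩
  · have hbdd : BddBelow (f.toLinearMap '' Iic a) := ⟨v, by
      rintro _ ⟨y, hy, rfl⟩; exact (hfa y hy).le⟩
    have := f.toLinearMap.nonpos_of_bddBelow_image_Iic hbdd
      (Pi.single_nonneg.2 zero_le_one : (0 : ι → ℝ) ≤ Pi.single j 1)
    simpa [w] using this
  · rw [hw, hw]
    linarith [hfK y hy, hfa a self_mem_Iic]

theorem exists_dotProduct_le_vecMul_dotProduct {lam : κ → ℝ} (hlam : lam ∈ stdSimplex ℝ κ)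
    (A : Matrix κ ι ℝ) (x : ι → ℝ) : ∃ i, A i ⬝ᵥ x ≤ (lam ᵥ* A) ⬝ᵥ x := by
  have hκ : (Finset.univ : Finset κ).Nonempty :=
    Finset.nonempty_of_sum_ne_zero (hlam.2.symm ▸ one_ne_zero)
  obtain ⟨i, -, hi⟩ := Finset.exists_mem_eq_inf' hκ (fun k => A k ⬝ᵥ x)
  refine ⟨i, ?_⟩
  calc A i ⬝ᵥ x = ∑ k, lam k * (A i ⬝ᵥ x) := by rw [← Finset.sum_mul, hlam.2, one_mul]
    _ ≤ ∑ k, lam k * (A k ⬝ᵥ x) := by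
      gcongr with k
      · exact hlam.1 k
      · exact hi ▸ Finset.inf'_le _ (Finset.mem_univ k)
    _ = (lam ᵥ* A) ⬝ᵥ x := dotProduct_mulVec lam A x

theorem exists_mem_stdSimplex_vecMul_le_iff (a : ι → ℝ) (A : Matrix κ ι ℝ) :
    (∀ x, 0 ≤ x → ∃ i, A i ⬝ᵥ x ≤ a ⬝ᵥ x) ↔ ∃ lam ∈ stdSimplex ℝ κ, lam ᵥ* A ≤ a := by
  classical
  constructor
  · intro h
    by_contra! hc
    have hdisj : Disjoint ((· ᵥ* A) '' stdSimplex ℝ κ) (Iic a) :=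
      disjoint_left.2 fun _ ⟨lam, hlam, hy⟩ hya => hc lam hlam (by rwa [← hy] at hya)
    obtain ⟨x, hx, hsep⟩ := exists_nonneg_dotProduct_lt_of_disjoint_Iic
      ((convex_stdSimplex ℝ κ).linear_image (vecMulLinear A))
      ((isCompact_stdSimplex ℝ κ).image (vecMulLinear A).continuous_of_finiteDimensional) hdisj
    obtain ⟨i, hi⟩ := h x hx
    exact (hsep (A i) ⟨Pi.single i 1, single_mem_stdSimplex ℝ i, single_one_vecMul i A⟩).not_ge hi
  · rintro ⟨lam, hlam, hle⟩ x hx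
    obtain ⟨i, hi⟩ := exists_dotProduct_le_vecMul_dotProduct hlam A x
    exact ⟨i, hi.trans (dotProduct_le_dotProduct_of_nonneg_right hle hx)⟩

/-- Farkas-type lemma: `⟨a,x⟩ ≥ min_i ⟨aᶦ,x⟩` for all nonnegative `x` iff
`a` dominates some convex combination of the `aᶦ`. -/
theorem stmt7 (n m : ℕ) (hm : 0 < m) (a : Fin n → ℝ) (A : Fin m → Fin n → ℝ) :
    (∀ x : Fin n → ℝ, (∀ j, 0 ≤ x j) →
      Finset.univ.inf' ⟨(⟨0, hm⟩ : Fin m), Finset.mem_univ _⟩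
        (fun i => ∑ j, A i j * x j) ≤ ∑ j, a j * x j) ↔
    ∃ lam : Fin m → ℝ, (∀ i, 0 ≤ lam i) ∧ (∑ i, lam i = 1) ∧
      ∀ j, ∑ i, lam i * A i j ≤ a j := by
  convert exists_mem_stdSimplex_vecMul_le_iff a A using 1
  · exact forall₂_congr fun x _ => (Finset.inf'_le_iff _).trans (by simp [dotProduct])
  · simp [stdSimplex, Pi.le_def, vecMul, dotProduct, and_assoc]
end

section
/- Let U and V be finite nonempty sets of vectors in ℝ^n. Then the inequality min_{u∈U} ⟨u,x⟩ ≥ min_{v∈V} ⟨v,x⟩ holds for all x ∈ ℝ^n with nonnegative coordinates if and only if for every u ∈ U there exists a vector c in the convex hull of V with u ≥ c componentwise. -/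
/-!
If every `u ∈ U` dominates a point `c` of the convex hull of `V`, then for `x ≥ 0` we get
`⟨u, x⟩ ≥ ⟨c, x⟩ ≥ min_{v ∈ V} ⟨v, x⟩`, the last step because a linear function attains its
minimum over a convex hull on the generating set. Conversely, if some `u ∈ U` dominates no point
of the compact convex set `conv V`, then `conv V` is disjoint from the closed convex orthant
`{y | y ≤ u}`, and Hahn–Banach gives a linear functional `y ↦ ⟨y, x⟩` bounded above on the orthant
by something smaller than its values on `conv V`. Boundedness above on the orthant forces
`x ≥ 0`, and then `⟨u, x⟩ < min_{v ∈ V} ⟨v, x⟩`.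
-/

open Finset

section

variable {ι : Type*} [Fintype ι]

theorem nonneg_of_forall_le_dotProduct_le {u x : ι → ℝ} {a : ℝ}
    (h : ∀ y ≤ u, y ⬝ᵥ x ≤ a) : 0 ≤ x := by
  classical
  intro i
  by_contra! hxi
  rw [Pi.zero_apply] at hxi
  have hu : u ⬝ᵥ x ≤ a := h u le_rfl
  set t := (a - u ⬝ᵥ x + 1) / -x i
  have ht : 0 ≤ t := div_nonneg (by linarith) (by linarith)
  have hle : u - t • Pi.single i 1 ≤ u :=
    sub_le_self u (smul_nonneg ht (Pi.single_nonneg.2 zero_le_one))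
  have htx : t * x i = -(a - u ⬝ᵥ x + 1) := by
    simp only [t]
    field_simp [hxi.ne]
  have hval : (u - t • Pi.single i 1) ⬝ᵥ x = a + 1 := by
    rw [sub_dotProduct, smul_dotProduct, single_dotProduct, one_mul, smul_eq_mul, htx]
    ring
  linarith [h _ hle]

theorem exists_nonneg_dotProduct_lt_of_forall_not_le {K : Set (ι → ℝ)} (hK : Convex ℝ K)
    (hKc : IsCompact K) {u : ι → ℝ} (hu : ∀ c ∈ K, ¬c ≤ u) :
    ∃ x, 0 ≤ x ∧ ∀ c ∈ K, u ⬝ᵥ x < c ⬝ᵥ x := by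
  classical
  obtain ⟨f, a, b, hfa, hab, hfb⟩ := geometric_hahn_banach_closed_compact (convex_Iic u)
    isClosed_Iic hK hKc (Set.disjoint_left.2 fun c hcu hcK => hu c hcK hcu)
  set x := (dotProductEquiv ℝ ι).symm f
  have hf : ∀ y, f y = y ⬝ᵥ x := fun y => by
    rw [dotProduct_comm, ← dotProductEquiv_apply_apply ℝ, LinearEquiv.apply_symm_apply]
    rfl
  refine ⟨x, nonneg_of_forall_le_dotProduct_le (u := u) (a := a) fun y hy => ?_, fun c hc => ?_⟩
  · exact hf y ▸ (hfa y hy).le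
  · rw [← hf, ← hf]
    exact (hfa u Set.self_mem_Iic).trans (hab.trans (hfb c hc))

theorem Finset.inf'_dotProduct_le_of_mem_convexHull {V : Finset (ι → ℝ)} (hV : V.Nonempty)
    {x c : ι → ℝ} (hc : c ∈ convexHull ℝ (V : Set (ι → ℝ))) :
    V.inf' hV (· ⬝ᵥ x) ≤ c ⬝ᵥ x := by
  obtain ⟨v, hv, hvc⟩ := ((dotProductBilin ℝ ℝ).flip x).concaveOn convex_univ
    |>.exists_le_of_mem_convexHull (Set.subset_univ _) hc
  exact (V.inf'_le _ hv).trans hvc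

end

/-- `min_{u∈U} ⟨u,x⟩ ≥ min_{v∈V} ⟨v,x⟩` for all nonnegative `x` iff every `u ∈ U`
dominates some point of the convex hull of `V`. -/
theorem stmt8 (n : ℕ) (U V : Finset (Fin n → ℝ)) (hU : U.Nonempty) (hV : V.Nonempty) :
    (∀ x : Fin n → ℝ, (∀ i, 0 ≤ x i) →
      V.inf' hV (fun v => ∑ i, v i * x i) ≤ U.inf' hU (fun u => ∑ i, u i * x i)) ↔
    ∀ u ∈ U, ∃ c ∈ convexHull ℝ (V : Set (Fin n → ℝ)), ∀ i, c i ≤ u i := by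
  change (∀ x : Fin n → ℝ, 0 ≤ x → V.inf' hV (· ⬝ᵥ x) ≤ U.inf' hU (· ⬝ᵥ x)) ↔
    ∀ u ∈ U, ∃ c ∈ convexHull ℝ (V : Set (Fin n → ℝ)), c ≤ u
  constructor
  · intro h u hu
    by_contra! hnot
    obtain ⟨x, hx, hlt⟩ := exists_nonneg_dotProduct_lt_of_forall_not_le (convex_convexHull ℝ _)
      (V.finite_toSet.isCompact_convexHull ℝ) hnot
    obtain ⟨v, hv, hvmin⟩ := V.exists_mem_eq_inf' hV (· ⬝ᵥ x)
    have := (h x hx).trans (U.inf'_le _ hu)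
    linarith [hlt v (subset_convexHull ℝ _ hv)]
  · intro h x hx
    refine U.le_inf' hU _ fun u hu => ?_
    obtain ⟨c, hc, hcu⟩ := h u hu
    exact (V.inf'_dotProduct_le_of_mem_convexHull hV hc).trans
      (dotProduct_le_dotProduct_of_nonneg_right hcu hx)
end

section
/- Let U and V be finite nonempty sets of vectors in ℝ^n. Then the inequality max_{u∈U} ⟨u,x⟩ ≤ max_{v∈V} ⟨v,x⟩ holds for all x ∈ ℝ^n with nonnegative coordinates if and only if for every u ∈ U there exists a vector c in the convex hull of V with u ≤ c componentwise. -/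
/-!
The right-hand side says that `U` lies in the lower closure of `conv V`, a closed convex lower
set. A point `u` outside it is strictly separated from it by a linear functional `⟨·, x⟩`
(Hahn–Banach), and `x ≥ 0` because a functional bounded above on a nonempty lower set is
nonnegative on the positive cone; this `x` violates the inequality of maxima. Conversely, if
`u ≤ c ∈ conv V` and `x ≥ 0`, then `⟨u, x⟩ ≤ ⟨c, x⟩ ≤ max_{v ∈ V} ⟨v, x⟩`.
-/

open Set

section OrderedModule

variable {E : Type*} [AddCommGroup E] [PartialOrder E] [IsOrderedAddMonoid E] [Module ℝ E]
  [PosSMulMono ℝ E]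

theorem Convex.lowerClosure {s : Set E} (hs : Convex ℝ s) :
    Convex ℝ (lowerClosure s : Set E) := by
  rintro a ⟨c, hc, hac⟩ b ⟨d, hd, hbd⟩ t r ht hr htr
  exact ⟨t • c + r • d, hs hc hd ht hr htr,
    add_le_add (smul_le_smul_of_nonneg_left hac ht) (smul_le_smul_of_nonneg_left hbd hr)⟩

theorem IsLowerSet.apply_nonneg_of_bddAbove_image {s : Set E} (hs : IsLowerSet s)
    (hne : s.Nonempty) (f : E →ₗ[ℝ] ℝ) (hf : BddAbove (f '' s)) {d : E} (hd : 0 ≤ d) :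
    0 ≤ f d := by
  obtain ⟨a, ha⟩ := hne
  obtain ⟨M, hM⟩ := hf
  by_contra! hfd
  -- `f` exceeds its bound `M` at the point `a - t • d ≤ a` of `s`
  set t := (M - f a + 1) / -f d
  have ht : 0 ≤ t := div_nonneg (by linarith [hM (mem_image_of_mem f ha)]) (by linarith)
  have hval : f (a - t • d) = M + 1 := by
    simp only [map_sub, map_smul, smul_eq_mul, t]
    field_simp [hfd.ne]
    ring
  have hmem : a - t • d ∈ s := hs (sub_le_self a (smul_nonneg ht hd)) ha
  linarith [hM (mem_image_of_mem f hmem)]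

end OrderedModule

section DotProduct

variable {ι : Type*} [Fintype ι]

theorem exists_nonneg_dotProduct_separation {s : Set (ι → ℝ)} (hconv : Convex ℝ s)
    (hclosed : IsClosed s) (hlower : IsLowerSet s) (hne : s.Nonempty) {u : ι → ℝ} (hu : u ∉ s) :
    ∃ x, 0 ≤ x ∧ ∃ r, (∀ c ∈ s, c ⬝ᵥ x < r) ∧ r < u ⬝ᵥ x := by
  classical
  obtain ⟨f, r, hfs, hfu⟩ := geometric_hahn_banach_closed_point hconv hclosed hu
  set x : ι → ℝ := fun i => f fun j => if i = j then 1 else 0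
  have hf : ∀ y, f y = y ⬝ᵥ x := fun y => by
    simpa [dotProduct, x] using LinearMap.pi_apply_eq_sum_univ (f : (ι → ℝ) →ₗ[ℝ] ℝ) y
  have hbdd : BddAbove ((f : (ι → ℝ) →ₗ[ℝ] ℝ) '' s) :=
    ⟨r, forall_mem_image.2 fun c hc => (hfs c hc).le⟩
  refine ⟨x, fun i => hlower.apply_nonneg_of_bddAbove_image hne _ hbdd ?_, r,
    fun c hc => hf c ▸ hfs c hc, hf u ▸ hfu⟩
  intro j
  dsimp only
  split_ifs <;> norm_num

theorem dotProduct_le_sup'_of_mem_convexHull {V : Finset (ι → ℝ)} (hV : V.Nonempty)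
    {c : ι → ℝ} (hc : c ∈ convexHull ℝ (V : Set (ι → ℝ))) (x : ι → ℝ) :
    c ⬝ᵥ x ≤ V.sup' hV (· ⬝ᵥ x) :=
  (((dotProductBilin ℝ ℝ).flip x).convexOn (𝕜 := ℝ) convex_univ).le_sup_of_mem_convexHull
    (subset_univ _) hc

theorem sup'_dotProduct_le_iff_subset_lowerClosure_convexHull {U V : Finset (ι → ℝ)}
    (hU : U.Nonempty) (hV : V.Nonempty) :
    (∀ x, 0 ≤ x → U.sup' hU (· ⬝ᵥ x) ≤ V.sup' hV (· ⬝ᵥ x)) ↔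
      (U : Set (ι → ℝ)) ⊆ lowerClosure (convexHull ℝ (V : Set (ι → ℝ))) := by
  have hK : IsCompact (convexHull ℝ (V : Set (ι → ℝ))) := V.finite_toSet.isCompact_convexHull ℝ
  constructor
  · intro h u hu
    by_contra hu'
    have hVK : (V : Set (ι → ℝ)) ⊆ lowerClosure (convexHull ℝ (V : Set (ι → ℝ))) :=
      (subset_convexHull ℝ _).trans subset_lowerClosure
    obtain ⟨x, hx, r, hr, hru⟩ := exists_nonneg_dotProduct_separation
      (convex_convexHull ℝ _).lowerClosure (hK.isClosed.lowerClosure_pi hK.isBounded.bddAbove)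
      (lowerClosure _).lower (hV.to_set.mono hVK) hu'
    have hVr : V.sup' hV (· ⬝ᵥ x) < r := (Finset.sup'_lt_iff hV).2 fun v hv => hr v (hVK hv)
    exact (hru.trans_le ((U.le_sup' (· ⬝ᵥ x) hu).trans (h x hx))).not_gt hVr
  · rintro h x hx
    refine Finset.sup'_le _ _ fun u hu => ?_
    obtain ⟨c, hc, huc⟩ := h hu
    exact (dotProduct_le_dotProduct_of_nonneg_right huc hx).trans
      (dotProduct_le_sup'_of_mem_convexHull hV hc x)

end DotProduct

/-- `max_{u∈U} ⟨u,x⟩ ≤ max_{v∈V} ⟨v,x⟩` for all nonnegative `x` iff every `u ∈ U`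
lies below some point of the convex hull of `V`. -/
theorem stmt9 (n : ℕ) (U V : Finset (Fin n → ℝ)) (hU : U.Nonempty) (hV : V.Nonempty) :
    (∀ x : Fin n → ℝ, (∀ i, 0 ≤ x i) →
      U.sup' hU (fun u => ∑ i, u i * x i) ≤ V.sup' hV (fun v => ∑ i, v i * x i)) ↔
    ∀ u ∈ U, ∃ c ∈ convexHull ℝ (V : Set (Fin n → ℝ)), ∀ i, u i ≤ c i :=
  sup'_dotProduct_le_iff_subset_lowerClosure_convexHull hU hV
end

section
/- Let a ∈ {0,1}^n be a 0-1 vector with m ones, let r ≥ 1 be real, and suppose c = ∑_{i=1}^l λ_i b^(i) is a convex combination (all λ_i > 0, ∑λ_i = 1, l ≤ m+1) of vectors b^(i) ∈ ℕ^n each having the same support as a, such that c ≤ r·a componentwise. Then there exists an index i such that every entry of b^(i) is at most r·m − m + r. -/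
/-- If a convex combination (with positive weights, at most `m+1` terms) of
nonnegative-integer vectors, each with the same support as a 0-1 vector `a`
having `m` ones, is bounded by `r·a`, then some vector in the combination has
all entries at most `r·m − m + r`. -/
theorem stmt12 (n m l : ℕ) (a : Fin n → ℕ) (ha01 : ∀ j, a j ≤ 1)
    (hm : (Finset.univ.filter fun j => a j = 1).card = m)
    (r : ℝ) (hr : 1 ≤ r) (hl : l ≤ m + 1)
    (b : Fin l → Fin n → ℕ)
    (hsupp : ∀ i j, b i j ≠ 0 ↔ a j ≠ 0)
    (lam : Fin l → ℝ) (hpos : ∀ i, 0 < lam i) (hsum : ∑ i, lam i = 1)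
    (hc : ∀ j, ∑ i, lam i * (b i j : ℝ) ≤ r * (a j : ℝ)) :
    ∃ i, ∀ j, (b i j : ℝ) ≤ r * m - m + r := by
  have hl0 : 0 < l := by
    rcases Nat.eq_zero_or_pos l with h | h
    · subst h; simp at hsum
    · exact h
  haveI : Nonempty (Fin l) := ⟨⟨0, hl0⟩⟩
  obtain ⟨i, -, hi⟩ : ∃ i ∈ Finset.univ, (1 : ℝ) / l ≤ lam i := by
    apply Finset.exists_le_of_sum_le Finset.univ_nonempty
    rw [hsum, Finset.sum_const, Finset.card_univ, Fintype.card_fin, nsmul_eq_mul]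
    rw [mul_one_div, div_self]
    exact Nat.cast_ne_zero.mpr hl0.ne'
  have hli : 0 < lam i := hpos i
  -- lam i * (m+1) ≥ 1
  have hlam_big : 1 ≤ lam i * (m + 1) := by
    have hl' : (l : ℝ) ≤ (m : ℝ) + 1 := by exact_mod_cast hl
    have hlpos : (0 : ℝ) < l := by exact_mod_cast hl0
    have h1 : 1 / ((m : ℝ) + 1) ≤ 1 / l := by
      apply one_div_le_one_div_of_le hlpos hl'
    have : 1 / ((m : ℝ) + 1) ≤ lam i := le_trans h1 hi
    have hm1 : (0 : ℝ) < (m : ℝ) + 1 := by positivity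
    calc (1 : ℝ) = 1 / ((m : ℝ) + 1) * ((m : ℝ) + 1) := by field_simp
      _ ≤ lam i * ((m : ℝ) + 1) := by
          exact mul_le_mul_of_nonneg_right this hm1.le
  refine ⟨i, fun j => ?_⟩
  have hab : ∀ k, (a j : ℝ) ≤ (b k j : ℝ) := by
    intro k
    have := ha01 j
    interval_cases h : a j
    · simp
    · have : b k j ≠ 0 := (hsupp k j).mpr (by simp [h])
      exact_mod_cast Nat.one_le_iff_ne_zero.mpr this
  have hsplit : ∑ k, lam k * (b k j : ℝ)
      = lam i * (b i j : ℝ) + ∑ k ∈ Finset.univ.erase i, lam k * (b k j : ℝ) :=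
    (Finset.add_sum_erase _ _ (Finset.mem_univ i)).symm
  have hlamsplit : (1 : ℝ) = lam i + ∑ k ∈ Finset.univ.erase i, lam k := by
    rw [← hsum, Finset.add_sum_erase _ _ (Finset.mem_univ i)]
  have hrest : (1 - lam i) * (a j : ℝ) ≤ ∑ k ∈ Finset.univ.erase i, lam k * (b k j : ℝ) := by
    have h1 : (1 - lam i) * (a j : ℝ) = ∑ k ∈ Finset.univ.erase i, lam k * (a j : ℝ) := by
      rw [← Finset.sum_mul]
      have : ∑ k ∈ Finset.univ.erase i, lam k = 1 - lam i := by
        rw [hlamsplit]; ring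
      rw [this]
    rw [h1]
    apply Finset.sum_le_sum
    intro k _
    exact mul_le_mul_of_nonneg_left (hab k) (hpos k).le
  have key : lam i * (b i j : ℝ) ≤ (r - 1 + lam i) * (a j : ℝ) := by
    have h1 := hc j
    rw [hsplit] at h1
    nlinarith [hrest]
  have haj1 : (a j : ℝ) ≤ 1 := by exact_mod_cast ha01 j
  have haj0 : (0 : ℝ) ≤ (a j : ℝ) := by positivity
  have key2 : lam i * (b i j : ℝ) ≤ r - 1 + lam i := by
    have hnn : (0 : ℝ) ≤ r - 1 + lam i := by nlinarith
    nlinarith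
  -- want : b i j ≤ r*m - m + r = (r-1)*(m+1) + 1
  have target : lam i * (b i j : ℝ) ≤ lam i * (r * m - m + r) := by
    have : r - 1 ≤ lam i * (m + 1) * (r - 1) := by
      nlinarith
    nlinarith
  exact le_of_mul_le_mul_left (by linarith [target]) hli
end

section
/- Let F be a nonempty family of subsets of a ground set E of size n, all of whose members have at most m elements. Consider a nonnegative weighting x : E → ℝ≥0 and sort the elements so that x(e_1) ≥ ... ≥ x(e_n). If the best-in greedy algorithm (scanning elements in this order and adding an element whenever the partial solution remains contained in some member of F) outputs a set A ∈ F, and S ∈ F is a maximum-weight member, then x(S) ≤ m · x(A). -/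
open scoped Classical in
/-- The best-in greedy algorithm: scan the elements of the list in order and add
an element whenever the extended partial solution is still contained in some
member of the family `F`. -/
noncomputable def bestInGreedy {E : Type*} [DecidableEq E]
    (F : Finset (Finset E)) (l : List E) : Finset E :=
  l.foldl (fun P v => if ∃ S ∈ F, insert v P ⊆ S then insert v P else P) ∅

/-!
If `u` lies in a member of `F`, then so does the singleton `{u}`; hence the first element `a`
of the scan that lies in some member of `F` is accepted, because every earlier element was
rejected and the partial solution is still empty when `a` is reached. With the heaviest-first
order, every element of `S ∈ F` weighs at most `x a`, so `x(S) ≤ |S| · x a ≤ m · x(A)`.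
-/

namespace BestInGreedy

variable {E : Type*} [DecidableEq E] (F : Finset (Finset E))

open scoped Classical in
noncomputable def step (P : Finset E) (v : E) : Finset E :=
  if ∃ S ∈ F, insert v P ⊆ S then insert v P else P

theorem bestInGreedy_eq_foldl (l : List E) : bestInGreedy F l = l.foldl (step F) ∅ := rfl

theorem subset_foldl_step (l : List E) (P : Finset E) : P ⊆ l.foldl (step F) P := by
  induction l generalizing P with
  | nil => exact subset_rfl
  | cons v t ih =>
    refine subset_trans ?_ (ih _)
    unfold step
    split_ifs
    · exact Finset.subset_insert v P
    · exact subset_rfl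

theorem bestInGreedy_cons_of_not_feasible {v : E} (hv : ¬∃ S ∈ F, v ∈ S) (t : List E) :
    bestInGreedy F (v :: t) = bestInGreedy F t := by
  have hstep : step F ∅ v = ∅ := if_neg fun ⟨S, hS, hvS⟩ => hv ⟨S, hS, by simpa using hvS⟩
  rw [bestInGreedy_eq_foldl, List.foldl_cons, hstep, bestInGreedy_eq_foldl]

theorem mem_bestInGreedy_cons_of_feasible {v : E} {S : Finset E} (hS : S ∈ F) (hv : v ∈ S)
    (t : List E) : v ∈ bestInGreedy F (v :: t) := by
  have hstep : step F ∅ v = {v} := if_pos ⟨S, hS, by simpa using hv⟩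
  rw [bestInGreedy_eq_foldl, List.foldl_cons, hstep]
  exact subset_foldl_step F t {v} (Finset.mem_singleton_self v)

theorem exists_mem_bestInGreedy_le {β : Type*} [Preorder β] {x : E → β} {l : List E}
    (hl : l.Pairwise fun a b => x b ≤ x a) {u : E} (hu : u ∈ l) {S : Finset E} (hS : S ∈ F)
    (huS : u ∈ S) : ∃ a ∈ bestInGreedy F l, x u ≤ x a := by
  induction l with
  | nil => simp at hu
  | cons v t ih =>
    rw [List.pairwise_cons] at hl
    by_cases hv : ∃ T ∈ F, v ∈ T
    · obtain ⟨T, hT, hvT⟩ := hv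
      refine ⟨v, mem_bestInGreedy_cons_of_feasible F hT hvT t, ?_⟩
      rcases List.mem_cons.mp hu with rfl | hut
      · exact le_rfl
      · exact hl.1 u hut
    · have hut : u ∈ t := (List.mem_cons.mp hu).resolve_left fun huv => hv ⟨S, hS, huv ▸ huS⟩
      rw [bestInGreedy_cons_of_not_feasible F hv]
      exact ih hl.2 hut

end BestInGreedy

theorem stmt14_general {E : Type*} [DecidableEq E] (n m : ℕ)
    (F : Finset (Finset E)) (hbound : ∀ S ∈ F, S.card ≤ m)
    (x : E → ℝ) (hx : ∀ v, 0 ≤ x v)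
    (e : Fin n → E) (he : Function.Bijective e)
    (hsort : ∀ i j : Fin n, i ≤ j → x (e j) ≤ x (e i))
    (A : Finset E) (hA : bestInGreedy F (List.ofFn e) = A)
    (S : Finset E) (hS : S ∈ F) :
    ∑ v ∈ S, x v ≤ (m : ℝ) * ∑ v ∈ A, x v := by
  obtain rfl | hSne := S.eq_empty_or_nonempty
  · simpa using mul_nonneg m.cast_nonneg (Finset.sum_nonneg fun v _ => hx v)
  obtain ⟨u, huS, hu_max⟩ := S.exists_max_image x hSne
  have hsorted : (List.ofFn e).Pairwise fun a b => x b ≤ x a :=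
    List.pairwise_ofFn.mpr fun i j hij => hsort i j hij.le
  have hu : u ∈ List.ofFn e := List.mem_ofFn.mpr (he.2 u)
  obtain ⟨a, haA, hua⟩ := BestInGreedy.exists_mem_bestInGreedy_le F hsorted hu hS huS
  rw [hA] at haA
  calc ∑ v ∈ S, x v ≤ S.card • x a :=
        Finset.sum_le_card_nsmul S x (x a) fun v hv => (hu_max v hv).trans hua
    _ = S.card * x a := nsmul_eq_mul _ _
    _ ≤ m * x a := by gcongr; exacts [hx a, hbound S hS]
    _ ≤ m * ∑ v ∈ A, x v := by gcongr; exact Finset.single_le_sum (fun v _ => hx v) haA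

/-- If all members of `F` have at most `m` elements, the weights are nonnegative
and the elements are scanned heaviest-first, and the best-in greedy algorithm
outputs a member `A` of `F`, then the maximum weight `x(S)` of a member of `F`
satisfies `x(S) ≤ m · x(A)`. -/
theorem stmt14 {E : Type*} [DecidableEq E] [Fintype E] (n m : ℕ)
    (F : Finset (Finset E)) (hbound : ∀ S ∈ F, S.card ≤ m)
    (x : E → ℝ) (hx : ∀ v, 0 ≤ x v)
    (e : Fin n → E) (he : Function.Bijective e)
    (hsort : ∀ i j : Fin n, i ≤ j → x (e j) ≤ x (e i))
    (A : Finset E) (hA : bestInGreedy F (List.ofFn e) = A) (hAF : A ∈ F)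
    (S : Finset E) (hS : S ∈ F) (hmax : ∀ T ∈ F, ∑ v ∈ T, x v ≤ ∑ v ∈ S, x v) :
    ∑ v ∈ S, x v ≤ (m : ℝ) * ∑ v ∈ A, x v :=
  stmt14_general n m F hbound x hx e he hsort A hA S hS
end

section
/- Let C = {(z, z³) : z ∈ GF(2^m)} ⊆ GF(2^m) × GF(2^m), identified with a set of 0-1 vectors of length 2m via coefficient vectors. Then C is a Sidon set: for any a, b, c, d ∈ C, if a + b = c + d (addition of integer vectors over ℕ, i.e., componentwise integer addition of the 0-1 coefficient vectors), then {a, b} = {c, d}. -/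
/-!
Reducing the integer coordinate identities modulo 2 gives `z + w = u + v` and
`z³ + w³ = u³ + v³` in the field. In characteristic 2,
`z³ + w³ = (z + w)³ + z w (z + w)`, so for `z + w ≠ 0` also `z w = u v`, and `{z, w}` and
`{u, v}` are the root sets of the same quadratic. If `z + w = 0`, then `z = w` and `u = v`,
and the integer identity `2 zᵢ = 2 uᵢ` of the coordinates forces `z = u`.
-/

namespace Module.Basis

variable {n : ℕ} [NeZero n] {ι M : Type*} [AddCommGroup M] [Module (ZMod n) M]
  (b : Basis ι (ZMod n) M)

theorem add_eq_add_of_repr_val_add_eq {x y x' y' : M}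
    (h : ∀ i, (b.repr x i).val + (b.repr y i).val = (b.repr x' i).val + (b.repr y' i).val) :
    x + y = x' + y' := by
  refine b.repr.injective (Finsupp.ext fun i => ?_)
  simpa only [map_add, Finsupp.add_apply, Nat.cast_add, ZMod.natCast_zmod_val] using
    congrArg (Nat.cast : ℕ → ZMod n) (h i)

theorem eq_of_repr_val_add_self_eq {x y : M}
    (h : ∀ i, (b.repr x i).val + (b.repr x i).val = (b.repr y i).val + (b.repr y i).val) :
    x = y :=
  b.repr.injective (Finsupp.ext fun i => ZMod.val_injective n (by have := h i; omega))

end Module.Basis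

theorem CharTwo.eq_or_eq_of_add_eq_of_cube_add_eq {R : Type*} [CommRing R] [IsDomain R] [CharP R 2]
    {z w u v : R} (hs : z + w = u + v) (hc : z ^ 3 + w ^ 3 = u ^ 3 + v ^ 3) (hzw : z + w ≠ 0) :
    (z = u ∧ w = v) ∨ (z = v ∧ w = u) := by
  have htwo : (2 : R) = 0 := CharTwo.two_eq_zero
  have hprod : z * w = u * v := by
    refine mul_left_cancel₀ hzw ?_
    have hv : v = z + w - u := by linear_combination -hs
    rw [hv] at hc
    linear_combination -hc - (z + w) * (z * w - (z + w) * u + u ^ 2) * htwo - (z + w) * u * hv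
  have hroots : (z - u) * (z - v) = 0 := by linear_combination z * hs - hprod
  rcases mul_eq_zero.mp hroots with hzu | hzv
  · exact Or.inl ⟨sub_eq_zero.mp hzu, by linear_combination hs - hzu⟩
  · exact Or.inr ⟨sub_eq_zero.mp hzv, by linear_combination hs - hzv⟩

theorem stmt16_general (m : ℕ)
    (β : Module.Basis (Fin m) (ZMod 2) (GaloisField 2 m))
    (z w u v : GaloisField 2 m)
    (h1 : ∀ i, (β.repr z i).val + (β.repr w i).val
              = (β.repr u i).val + (β.repr v i).val)
    (h3 : ∀ i, (β.repr (z ^ 3) i).val + (β.repr (w ^ 3) i).val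
              = (β.repr (u ^ 3) i).val + (β.repr (v ^ 3) i).val) :
    (z = u ∧ w = v) ∨ (z = v ∧ w = u) := by
  have hs := β.add_eq_add_of_repr_val_add_eq h1
  by_cases hzw : z + w = 0
  · obtain rfl : z = w := CharTwo.add_eq_zero.mp hzw
    obtain rfl : u = v := CharTwo.add_eq_zero.mp (hs ▸ hzw)
    obtain rfl : z = u := β.eq_of_repr_val_add_self_eq h1
    exact Or.inl ⟨rfl, rfl⟩
  · exact CharTwo.eq_or_eq_of_add_eq_of_cube_add_eq hs (β.add_eq_add_of_repr_val_add_eq h3) hzw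

/-- Lindström: the cubic parabola `{(z, z³) : z ∈ GF(2^m)}`, with field elements
identified with their 0-1 coordinate vectors, is a Sidon set with respect to
componentwise integer addition. -/
theorem stmt16 (m : ℕ) (hm : 0 < m)
    (β : Module.Basis (Fin m) (ZMod 2) (GaloisField 2 m))
    (z w u v : GaloisField 2 m)
    (h1 : ∀ i, (β.repr z i).val + (β.repr w i).val
              = (β.repr u i).val + (β.repr v i).val)
    (h3 : ∀ i, (β.repr (z ^ 3) i).val + (β.repr (w ^ 3) i).val
              = (β.repr (u ^ 3) i).val + (β.repr (v ^ 3) i).val) :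
    (z = u ∧ w = v) ∨ (z = v ∧ w = u) :=
  stmt16_general m β z w u v h1 h3
end
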